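/- arXiv:1803.07401 — 2 statements merged into one kernel-verified Lean document; each statement's English description precedes it below -/
import Mathlib

section
/- In the k-nearest-neighbor opinion dynamics, a configuration x ∈ ℝ^n is clustered (i.e., for every agent i, all agents in the neighbor set N_i have opinion equal to x_i) if and only if for every agent i, the set V_i = {j : x_j = x_i} has cardinality at least k. -/
open scoped Classical
open Finset

noncomputable def nearList {n : ℕ} (x : Fin n → ℝ) (i : Fin n) : List (Fin n) :=
  @List.insertionSort (Fin n)
    (fun j j' => |x j - x i| < |x j' - x i| ∨ (|x j - x i| = |x j' - x i| ∧ j ≤ j'))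
    (Classical.decRel _) (List.finRange n)

/-- The set of the `k` agents nearest to `i` in opinion distance (ties broken by lower index). -/
noncomputable def nbr {n : ℕ} (k : ℕ) (x : Fin n → ℝ) (i : Fin n) : Finset (Fin n) :=
  ((nearList x i).take k).toFinset

/-- The asynchronous update `f(x,i)`. -/
noncomputable def upd {n : ℕ} (k : ℕ) (x : Fin n → ℝ) (i : Fin n) : Fin n → ℝ :=
  Function.update x i ((∑ j ∈ nbr k x i, x j) / k)

/-- A configuration is clustered if all neighbors of every agent share its opinion. -/
def Clustered {n : ℕ} (k : ℕ) (x : Fin n → ℝ) : Prop :=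
  ∀ i : Fin n, ∀ j ∈ nbr k x i, x j = x i

/-- `μ(x)`: lowest index attaining the minimum. -/
noncomputable def argminIdx {n : ℕ} [NeZero n] (x : Fin n → ℝ) : Fin n :=
  (Finset.univ.filter fun i => ∀ j, x i ≤ x j).min' (by
    obtain ⟨i, -, hi⟩ := Finset.exists_min_image Finset.univ x Finset.univ_nonempty
    exact ⟨i, Finset.mem_filter.mpr ⟨Finset.mem_univ _, fun j => hi j (Finset.mem_univ j)⟩⟩)

/-- `M(x)`: lowest index attaining the maximum. -/
noncomputable def argmaxIdx {n : ℕ} [NeZero n] (x : Fin n → ℝ) : Fin n :=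
  argminIdx (fun i => -x i)

/-- Trajectory of the dynamics with (possibly state-dependent) update selector `σ`. -/
noncomputable def traj {n : ℕ} (k : ℕ) (σ : ℕ → (Fin n → ℝ) → Fin n) (x0 : Fin n → ℝ) :
    ℕ → Fin n → ℝ
  | 0 => x0
  | t + 1 => upd k (traj k σ x0 t) (σ t (traj k σ x0 t))

/-!
`N_i` always has exactly `k` elements (for `k ≤ n`), so clustering forces `N_i ⊆ V_i` and hence
`k ≤ |V_i|`. Conversely, `nearList x i` is sorted by distance to `x i`, so every agent outside `N_i`
is at least as far from `x i` as every agent inside. If `k ≤ |V_i|`, either `V_i ⊆ N_i`, and then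
`V_i = N_i` by cardinality, or some agent at distance `0` lies outside `N_i`, and then all of `N_i`
is at distance `0`.
-/

section NearList

variable {n : ℕ} (x : Fin n → ℝ) (i : Fin n)

theorem nearList_perm : (nearList x i).Perm (List.finRange n) :=
  @List.perm_insertionSort _ _ (Classical.decRel _) _

theorem nodup_nearList : (nearList x i).Nodup :=
  (nearList_perm x i).nodup_iff.mpr (List.nodup_finRange n)

theorem mem_nearList (j : Fin n) : j ∈ nearList x i :=
  (nearList_perm x i).mem_iff.mpr (List.mem_finRange j)

theorem length_nearList : (nearList x i).length = n :=
  (nearList_perm x i).length_eq.trans List.length_finRange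

theorem pairwise_nearList :
    (nearList x i).Pairwise fun j j' => |x j - x i| ≤ |x j' - x i| := by
  let r : Fin n → Fin n → Prop := fun j j' =>
    |x j - x i| < |x j' - x i| ∨ (|x j - x i| = |x j' - x i| ∧ j ≤ j')
  -- `r` is `≤` on the lexicographic key `(|x j - x i|, j)`.
  let key : Fin n → Lex (ℝ × Fin n) := fun j => toLex (|x j - x i|, j)
  have hr : ∀ j j', r j j' ↔ key j ≤ key j' := fun j j' => by
    simp only [r, key, Prod.Lex.toLex_le_toLex]
  have : Std.Total r := ⟨fun j j' => by simpa only [hr] using le_total (key j) (key j')⟩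
  have : IsTrans (Fin n) r := ⟨fun _ _ _ => by simpa only [hr] using le_trans⟩
  refine (@List.pairwise_insertionSort _ r (Classical.decRel _) _ _ _).imp fun {j j'} hjj' => ?_
  rcases hjj' with hlt | ⟨heq, -⟩
  exacts [hlt.le, heq.le]

end NearList

section Nbr

variable {n k : ℕ} (x : Fin n → ℝ) (i : Fin n)

theorem card_nbr (hkn : k ≤ n) : (nbr k x i).card = k := by
  rw [nbr, List.toFinset_card_of_nodup ((nodup_nearList x i).sublist (List.take_sublist _ _)),
    List.length_take, length_nearList, min_eq_left hkn]

theorem abs_sub_le_of_mem_nbr_of_notMem_nbr {j v : Fin n} (hj : j ∈ nbr k x i)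
    (hv : v ∉ nbr k x i) : |x j - x i| ≤ |x v - x i| := by
  have hv_drop : v ∈ (nearList x i).drop k := by
    have := mem_nearList x i v
    rw [← List.take_append_drop k (nearList x i), List.mem_append] at this
    exact this.resolve_left fun hv_take => hv (List.mem_toFinset.mpr hv_take)
  have hsorted := pairwise_nearList x i
  rw [← List.take_append_drop k (nearList x i), List.pairwise_append] at hsorted
  exact hsorted.2.2 j (List.mem_toFinset.mp hj) v hv_drop

theorem eq_of_mem_nbr_of_notMem_nbr {j v : Fin n} (hj : j ∈ nbr k x i) (hv : v ∉ nbr k x i)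
    (hvi : x v = x i) : x j = x i := by
  have := abs_sub_le_of_mem_nbr_of_notMem_nbr x i hj hv
  rw [hvi, sub_self, abs_zero, abs_nonpos_iff, sub_eq_zero] at this
  exact this

end Nbr

theorem clustered_iff_card_general {n k : ℕ} (hkn : k ≤ n) (x : Fin n → ℝ) :
    Clustered k x ↔
      ∀ i : Fin n, k ≤ (Finset.univ.filter fun j => x j = x i).card := by
  refine ⟨fun h i => ?_, fun h i j hj => ?_⟩
  · rw [← card_nbr x i hkn]
    exact card_le_card fun j hj => mem_filter.mpr ⟨mem_univ j, h i j hj⟩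
  · by_cases hsub : (univ.filter fun j => x j = x i) ⊆ nbr k x i
    · have hV : (univ.filter fun j => x j = x i) = nbr k x i :=
        eq_of_subset_of_card_le hsub ((card_nbr x i hkn).trans_le (h i))
      rw [← hV] at hj
      exact (mem_filter.mp hj).2
    · obtain ⟨v, hv, hvn⟩ := not_subset.mp hsub
      exact eq_of_mem_nbr_of_notMem_nbr x i hj hvn (mem_filter.mp hv).2

/-- `x` is clustered iff every agent's opinion is shared by at least `k` agents. -/
theorem clustered_iff_card {n k : ℕ} (hk : 1 ≤ k) (hkn : k ≤ n) (x : Fin n → ℝ) :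
    Clustered k x ↔
      ∀ i : Fin n, k ≤ (Finset.univ.filter fun j => x j = x i).card :=
  clustered_iff_card_general hkn x
end

section
/- Define, for x ∈ ℝ^n, y = max_{i ∈ N_{μ(x)}} x_i and z = min_{i ∈ N_{M(x)}} x_i, where N_{μ(x)} and N_{M(x)} are the k-nearest-neighbor sets of the minimum-opinion and maximum-opinion agents respectively. Then z ≤ y holds for all x ∈ ℝ^n if and only if n < 2k. -/
open scoped Classical
open Finset

/-!
If `n < 2k`, the two neighbourhoods, each made of `k` of the `n` agents, share an agent, and its
opinion lies between `z` and `y`. If `n ≥ 2k`, put agents `0, …, k - 1` at opinion `0` and the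
other `n - k ≥ k` agents at `1`: the minimum agent then sees only opinion `0` and the maximum
agent only opinion `1`, so `z = 1 > 0 = y`.
-/

namespace NearestNeighbors

variable {n k : ℕ} {x : Fin n → ℝ} {i j s : Fin n}

/-- The order in which `nearList x i` sorts the agents. -/
def Nearer (x : Fin n → ℝ) (i j j' : Fin n) : Prop :=
  |x j - x i| < |x j' - x i| ∨ (|x j - x i| = |x j' - x i| ∧ j ≤ j')

theorem nearer_iff_toLex_le {j' : Fin n} :
    Nearer x i j j' ↔ toLex (|x j - x i|, j) ≤ toLex (|x j' - x i|, j') := by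
  rw [Prod.Lex.toLex_le_toLex, Nearer]

instance : Std.Total (Nearer x i) :=
  ⟨fun a b => by simpa only [nearer_iff_toLex_le] using le_total _ _⟩

instance : IsTrans (Fin n) (Nearer x i) :=
  ⟨fun a b c => by simpa only [nearer_iff_toLex_le] using le_trans⟩

theorem nearList_perm : (nearList x i).Perm (List.finRange n) :=
  @List.perm_insertionSort (Fin n) _ (Classical.decRel _) (List.finRange n)

theorem nearList_pairwise : (nearList x i).Pairwise (Nearer x i) :=
  @List.pairwise_insertionSort (Fin n) _ (Classical.decRel _) _ _ (List.finRange n)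

theorem card_nbr : #(nbr k x i) = min k n := by
  have hnodup : (nearList x i).Nodup := nearList_perm.nodup_iff.mpr (List.nodup_finRange n)
  rw [nbr, List.toFinset_card_of_nodup (hnodup.sublist (List.take_sublist _ _)),
    List.length_take, nearList_perm.length_eq, List.length_finRange]

theorem nbr_nonempty (hk : 1 ≤ k) : (nbr k x i).Nonempty := by
  have := i.pos
  rw [← Finset.card_pos, card_nbr]
  omega

theorem abs_sub_le_of_mem_nbr_of_notMem (hj : j ∈ nbr k x i) (hs : s ∉ nbr k x i) :
    |x j - x i| ≤ |x s - x i| := by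
  rw [nbr, List.mem_toFinset] at hj hs
  have hs_drop : s ∈ (nearList x i).drop k := by
    have hs_mem : s ∈ nearList x i := nearList_perm.mem_iff.mpr (List.mem_finRange s)
    rw [← List.take_append_drop k (nearList x i), List.mem_append] at hs_mem
    exact hs_mem.resolve_left hs
  rcases nearList_pairwise.rel_of_mem_take_of_mem_drop hj hs_drop with h | ⟨h, -⟩
  exacts [h.le, h.le]

/-- Agents sharing `i`'s opinion are at distance `0`, so they are taken first. -/
theorem eq_of_mem_nbr_of_le_card (h : k ≤ #{s | x s = x i}) (hj : j ∈ nbr k x i) :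
    x j = x i := by
  by_contra hne
  have hpos : 0 < |x j - x i| := abs_pos.mpr (sub_ne_zero.mpr hne)
  have hsub : insert j ({s | x s = x i} : Finset (Fin n)) ⊆ nbr k x i := by
    refine Finset.insert_subset hj fun s hs => ?_
    by_contra hs'
    have := abs_sub_le_of_mem_nbr_of_notMem hj hs'
    rw [(Finset.mem_filter.mp hs).2, sub_self, abs_zero] at this
    linarith
  have := Finset.card_le_card hsub
  rw [Finset.card_insert_of_notMem (by simpa using hne), card_nbr] at this
  omega

theorem image_nbr_eq_singleton (hk : 1 ≤ k) (h : k ≤ #{s | x s = x i}) :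
    x '' (nbr k x i : Set (Fin n)) = {x i} :=
  (nbr_nonempty hk).coe_sort.elim fun ⟨j, hj⟩ => Set.eq_singleton_iff_unique_mem.mpr
    ⟨eq_of_mem_nbr_of_le_card h hj ▸ ⟨j, hj, rfl⟩,
      by rintro _ ⟨s, hs, rfl⟩; exact eq_of_mem_nbr_of_le_card h hs⟩

theorem nbr_inter_nonempty (hn : n < 2 * k) (i' : Fin n) :
    (nbr k x i ∩ nbr k x i').Nonempty := by
  have := i.pos
  have hunion : #(nbr k x i ∪ nbr k x i') ≤ n := (Finset.card_le_univ _).trans_eq (by simp)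
  rw [← Finset.card_pos]
  have := Finset.card_union_add_card_inter (nbr k x i) (nbr k x i')
  rw [card_nbr, card_nbr] at this
  omega

end NearestNeighbors

theorem csInf_image_le_csSup_image {α β : Type*} [DecidableEq α] [ConditionallyCompleteLattice β]
    (f : α → β) {s t : Finset α} (h : (s ∩ t).Nonempty) :
    sInf (f '' (s : Set α)) ≤ sSup (f '' (t : Set α)) := by
  obtain ⟨a, ha⟩ := h
  obtain ⟨has, hat⟩ := Finset.mem_inter.mp ha
  calc sInf (f '' (s : Set α)) ≤ f a :=
        csInf_le ((s.finite_toSet.image f).bddBelow) ⟨_, has, rfl⟩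
    _ ≤ sSup (f '' (t : Set α)) :=
        le_csSup ((t.finite_toSet.image f).bddAbove) ⟨_, hat, rfl⟩

section Extremes

variable {n : ℕ} [NeZero n]

theorem argminIdx_le (x : Fin n → ℝ) (j : Fin n) : x (argminIdx x) ≤ x j := by
  unfold argminIdx
  exact (Finset.mem_filter.mp (Finset.min'_mem {i | ∀ j, x i ≤ x j} _)).2 j

theorem le_argmaxIdx (x : Fin n → ℝ) (j : Fin n) : x j ≤ x (argmaxIdx x) :=
  neg_le_neg_iff.mp (argminIdx_le (fun i => -x i) j)

end Extremes

def lowHigh (n k : ℕ) (i : Fin n) : ℝ := if (i : ℕ) < k then 0 else 1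

section LowHigh

variable {n k : ℕ}

theorem card_lowHigh_eq_zero : #{s | lowHigh n k s = 0} = min n k := by
  simp only [lowHigh, ite_eq_left_iff, one_ne_zero, imp_false, not_not, Fin.card_filter_val_lt]

theorem card_lowHigh_eq_one : #{s | lowHigh n k s = 1} = n - min n k := by
  simp only [lowHigh, ite_eq_right_iff, zero_ne_one, imp_false]
  rw [Finset.filter_not, Finset.card_sdiff_of_subset (Finset.filter_subset _ _),
    Fin.card_filter_val_lt, Finset.card_univ, Fintype.card_fin]

variable [NeZero n]

theorem lowHigh_argminIdx (hk : 1 ≤ k) : lowHigh n k (argminIdx (lowHigh n k)) = 0 := by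
  have hle := argminIdx_le (lowHigh n k) ⟨0, Nat.pos_of_neZero n⟩
  simp only [lowHigh, if_pos (show 0 < k by omega)] at hle
  exact le_antisymm hle (by unfold lowHigh; split_ifs <;> norm_num)

theorem lowHigh_argmaxIdx (hkn : k < n) : lowHigh n k (argmaxIdx (lowHigh n k)) = 1 := by
  have hge := le_argmaxIdx (lowHigh n k) ⟨k, hkn⟩
  simp only [lowHigh, lt_irrefl, if_false] at hge
  exact le_antisymm (by unfold lowHigh; split_ifs <;> norm_num) hge

end LowHigh

open NearestNeighbors in
theorem sSup_nbr_argminIdx_lt_sInf_nbr_argmaxIdx_lowHigh {n k : ℕ} [NeZero n] (hk : 1 ≤ k)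
    (hn : 2 * k ≤ n) :
    sSup (lowHigh n k '' (nbr k (lowHigh n k) (argminIdx (lowHigh n k)) : Set (Fin n))) <
      sInf (lowHigh n k '' (nbr k (lowHigh n k) (argmaxIdx (lowHigh n k)) : Set (Fin n))) := by
  have hmin := lowHigh_argminIdx (n := n) hk
  have hmax := lowHigh_argmaxIdx (n := n) (k := k) (by omega)
  rw [image_nbr_eq_singleton hk (by rw [hmin, card_lowHigh_eq_zero]; omega),
    image_nbr_eq_singleton hk (by rw [hmax, card_lowHigh_eq_one]; omega),
    csSup_singleton, csInf_singleton, hmin, hmax]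
  exact zero_lt_one

theorem z_le_y_iff_general {n k : ℕ} [NeZero n] (hk : 1 ≤ k) :
    (∀ x : Fin n → ℝ,
      sInf (x '' (nbr k x (argmaxIdx x) : Set (Fin n))) ≤
        sSup (x '' (nbr k x (argminIdx x) : Set (Fin n)))) ↔ n < 2 * k := by
  refine ⟨fun h => ?_, fun hn x => ?_⟩
  · by_contra! hn
    exact (h (lowHigh n k)).not_gt (sSup_nbr_argminIdx_lt_sInf_nbr_argmaxIdx_lowHigh hk hn)
  · exact csInf_image_le_csSup_image x (NearestNeighbors.nbr_inter_nonempty hn _)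

/-- `z ≤ y` for every configuration iff `n < 2k`. -/
theorem z_le_y_iff {n k : ℕ} [NeZero n] (hk : 1 ≤ k) (hkn : k ≤ n) :
    (∀ x : Fin n → ℝ,
      sInf (x '' (nbr k x (argmaxIdx x) : Set (Fin n))) ≤
        sSup (x '' (nbr k x (argminIdx x) : Set (Fin n)))) ↔ n < 2 * k :=
  z_le_y_iff_general hk
end
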